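/- There is a constant C_d depending only on d such that the following holds. Let Φ : ℝ^d → ℝ be smooth, b : ℝ^d → ℂ be a bounded measurable function with compact support K, and V an open neighborhood of K on which ξ ↦ ∇Φ(ξ) is injective and |det Hess Φ(ξ)| ≥ a₀ > 0. Let ψ ∈ C₀^∞(ℝ) with ψ(x) = 1 for |x| ≤ 1 and ψ(x) = 0 for |x| ≥ 2, and 0 ≤ ψ ≤ 1. Then for every λ ≥ 1, |∫_{ℝ^d} e^{iλΦ(ξ)} ψ(λ^{1/2} |∇Φ(ξ)|) b(ξ) dξ| ≤ (C_d / a₀) (sup_{ξ∈K} |b(ξ)|) λ^{-d/2}. -/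

import Mathlib

/-!
The cutoff restricts the integrand to the set `T` of `ξ ∈ supp b` with `|∇Φ(ξ)| ≤ 2 λ^{-1/2}`, and
there it is bounded by `sup |b|`. Since `∇Φ` is injective on `T` with Jacobian `Hess Φ`, the change
of variables formula gives `a₀ · |T| ≤ |∇Φ(T)| ≤ |B(0, 2 λ^{-1/2})| = 2^d λ^{-d/2} |B(0, 1)|`.
-/

open MeasureTheory

noncomputable def hessM (d : ℕ) (Φ : EuclideanSpace ℝ (Fin d) → ℝ)
    (ξ : EuclideanSpace ℝ (Fin d)) : Matrix (Fin d) (Fin d) ℝ :=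
  fun i j => iteratedFDeriv ℝ 2 Φ ξ ![EuclideanSpace.single i 1, EuclideanSpace.single j 1]

open InnerProductSpace

theorem inner_fderiv_gradient_apply {E : Type*} [NormedAddCommGroup E] [InnerProductSpace ℝ E]
    [CompleteSpace E] (Φ : E → ℝ) (ξ v w : E) :
    inner ℝ (fderiv ℝ (gradient Φ) ξ v) w = fderiv ℝ (fderiv ℝ Φ) ξ v w := by
  have hgrad : gradient Φ = (toDual ℝ E).symm ∘ fderiv ℝ Φ := rfl
  rw [hgrad, LinearIsometryEquiv.comp_fderiv]
  exact toDual_symm_apply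

theorem ContDiff.gradient {E : Type*} [NormedAddCommGroup E] [InnerProductSpace ℝ E]
    [CompleteSpace E] {Φ : E → ℝ} {n : WithTop ℕ∞} (hΦ : ContDiff ℝ (n + 1) Φ) :
    ContDiff ℝ n (gradient Φ) :=
  (toDual ℝ E).symm.contDiff.comp (hΦ.fderiv_right le_rfl)

theorem det_fderiv_gradient_eq_det_hessM {d : ℕ} (Φ : EuclideanSpace ℝ (Fin d) → ℝ)
    (ξ : EuclideanSpace ℝ (Fin d)) :
    (fderiv ℝ (gradient Φ) ξ).det = (hessM d Φ ξ).det := by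
  -- The matrix of the derivative of `∇Φ` is the transpose of `hessM`; no symmetry is needed.
  rw [ContinuousLinearMap.det,
    ← LinearMap.det_toMatrix (EuclideanSpace.basisFun (Fin d) ℝ).toBasis, ← Matrix.det_transpose]
  congr 1
  ext i j
  rw [Matrix.transpose_apply, LinearMap.toMatrix_apply, hessM, iteratedFDeriv_two_apply]
  simp only [OrthonormalBasis.coe_toBasis, EuclideanSpace.basisFun_apply,
    OrthonormalBasis.coe_toBasis_repr_apply, EuclideanSpace.basisFun_repr]
  rw [← inner_fderiv_gradient_apply]
  simp [EuclideanSpace.inner_single_right]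

section ChangeOfVariables

variable {E : Type*} [NormedAddCommGroup E] [NormedSpace ℝ E] [FiniteDimensional ℝ E]
  [MeasurableSpace E] [BorelSpace E] (μ : Measure E) [μ.IsAddHaarMeasure]
  {f : E → E} {s : Set E} {a : ℝ}

theorem ofReal_mul_addHaar_le_addHaar_image {f' : E → E →L[ℝ] E} (hs : MeasurableSet s)
    (hf' : ∀ x ∈ s, HasFDerivWithinAt f (f' x) s x) (hf : Set.InjOn f s)
    (ha : ∀ x ∈ s, a ≤ |(f' x).det|) :
    ENNReal.ofReal a * μ s ≤ μ (f '' s) :=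
  calc ENNReal.ofReal a * μ s = ∫⁻ _ in s, ENNReal.ofReal a ∂μ := (setLIntegral_const s _).symm
    _ ≤ ∫⁻ x in s, ENNReal.ofReal |(f' x).det| ∂μ :=
      setLIntegral_mono' hs fun x hx => ENNReal.ofReal_le_ofReal (ha x hx)
    _ = μ (f '' s) := lintegral_abs_det_fderiv_eq_addHaar_image μ hs hf' hf

theorem measureReal_inter_preimage_closedBall_le (hf : Differentiable ℝ f)
    (hs : MeasurableSet s) (hinj : Set.InjOn f s) (ha₀ : 0 < a)
    (ha : ∀ x ∈ s, a ≤ |(fderiv ℝ f x).det|) {r : ℝ} (hr : 0 ≤ r) :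
    μ.real (s ∩ f ⁻¹' Metric.closedBall 0 r) ≤
      r ^ Module.finrank ℝ E * μ.real (Metric.ball 0 1) / a := by
  set t := s ∩ f ⁻¹' Metric.closedBall 0 r
  have ht : MeasurableSet t := hs.inter (hf.continuous.measurable measurableSet_closedBall)
  have hball : μ (f '' t) ≤ μ (Metric.closedBall 0 r) :=
    measure_mono (Set.image_subset_iff.mpr Set.inter_subset_right)
  have key := (ofReal_mul_addHaar_le_addHaar_image μ ht
    (fun x _ => (hf x).hasFDerivAt.hasFDerivWithinAt) (hinj.mono Set.inter_subset_left)
    (fun x hx => ha x hx.1)).trans hball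
  rw [Measure.addHaar_closedBall μ _ hr] at key
  have key' := ENNReal.toReal_mono (ENNReal.mul_ne_top ENNReal.ofReal_ne_top
    measure_ball_lt_top.ne) key
  rw [ENNReal.toReal_mul, ENNReal.toReal_mul, ENNReal.toReal_ofReal ha₀.le,
    ENNReal.toReal_ofReal (by positivity)] at key'
  rw [le_div_iff₀ ha₀, mul_comm]
  exact key'

end ChangeOfVariables

theorem norm_le_sSup_image_norm_tsupport {X F : Type*} [TopologicalSpace X]
    [NormedAddCommGroup F] {b : X → F} (hb : ∃ B, ∀ x, ‖b x‖ ≤ B) (x : X) :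
    ‖b x‖ ≤ sSup ((fun y => ‖b y‖) '' tsupport b) := by
  obtain ⟨B, hB⟩ := hb
  by_cases hx : x ∈ tsupport b
  · exact le_csSup ⟨B, by rintro _ ⟨y, _, rfl⟩; exact hB y⟩ ⟨x, hx, rfl⟩
  · rw [image_eq_zero_of_notMem_tsupport hx, norm_zero]
    exact Real.sSup_nonneg (by rintro _ ⟨y, _, rfl⟩; exact norm_nonneg _)

theorem div_sqrt_pow {x : ℝ} (hx : 0 ≤ x) (c : ℝ) (n : ℕ) :
    (c / Real.sqrt x) ^ n = c ^ n * x ^ (-(n : ℝ) / 2) := by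
  rw [div_pow, div_eq_mul_inv, Real.sqrt_eq_rpow, ← Real.rpow_natCast (x ^ _),
    ← Real.rpow_mul hx, neg_div, Real.rpow_neg hx]
  ring_nf

theorem norm_cexp_I_mul_mul_ofReal_mul_le (s t u : ℝ) (z : ℂ) (hu : |u| ≤ 1) :
    ‖Complex.exp (Complex.I * s * t) * u * z‖ ≤ ‖z‖ := by
  have hI : Complex.I * s * t = Complex.I * ↑(s * t) := by push_cast; ring
  rw [norm_mul, norm_mul, hI, Complex.norm_exp_I_mul_ofReal, Complex.norm_real, Real.norm_eq_abs,
    one_mul]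
  exact mul_le_of_le_one_left (norm_nonneg z) hu

theorem stmt14 (d : ℕ) :
    ∃ C : ℝ, 0 < C ∧
      ∀ (Φ : EuclideanSpace ℝ (Fin d) → ℝ) (b : EuclideanSpace ℝ (Fin d) → ℂ)
        (V : Set (EuclideanSpace ℝ (Fin d))) (a₀ : ℝ) (ψ : ℝ → ℝ),
        ContDiff ℝ (⊤ : ℕ∞) Φ → Measurable b → HasCompactSupport b →
        (∃ B, ∀ ξ, ‖b ξ‖ ≤ B) →
        IsOpen V → tsupport b ⊆ V →
        Set.InjOn (gradient Φ) V →
        0 < a₀ → (∀ ξ ∈ V, a₀ ≤ |(hessM d Φ ξ).det|) →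
        ContDiff ℝ (⊤ : ℕ∞) ψ → HasCompactSupport ψ →
        (∀ x : ℝ, |x| ≤ 1 → ψ x = 1) → (∀ x : ℝ, 2 ≤ |x| → ψ x = 0) →
        (∀ x : ℝ, 0 ≤ ψ x ∧ ψ x ≤ 1) →
        ∀ lam : ℝ, 1 ≤ lam →
          ‖∫ ξ : EuclideanSpace ℝ (Fin d),
              Complex.exp (Complex.I * (lam : ℂ) * (Φ ξ : ℂ)) *
                ((ψ (Real.sqrt lam * ‖gradient Φ ξ‖) : ℝ) : ℂ) * b ξ‖ ≤
            C / a₀ * sSup ((fun ξ => ‖b ξ‖) '' tsupport b) * lam ^ (-(d : ℝ) / 2) := by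
  set c := volume.real (Metric.ball (0 : EuclideanSpace ℝ (Fin d)) 1)
  have hc : 0 < c :=
    ENNReal.toReal_pos (Metric.measure_ball_pos volume _ one_pos).ne' measure_ball_lt_top.ne
  refine ⟨2 ^ d * c, by positivity, ?_⟩
  intro Φ b V a₀ ψ hΦ _ hbc hbB _ hsub hinj ha₀ hdet _ _ _ hψ0 hψ01 lam hlam
  have hsqrt : 0 < Real.sqrt lam := Real.sqrt_pos.2 (by linarith)
  set r := 2 / Real.sqrt lam
  set T := tsupport b ∩ gradient Φ ⁻¹' Metric.closedBall 0 r
  have hvanish : ∀ ξ ∉ T, Complex.exp (Complex.I * (lam : ℂ) * (Φ ξ : ℂ)) *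
      ((ψ (Real.sqrt lam * ‖gradient Φ ξ‖) : ℝ) : ℂ) * b ξ = 0 := by
    intro ξ hξ
    rcases not_and_or.1 hξ with hb | hgrad
    · rw [image_eq_zero_of_notMem_tsupport hb, mul_zero]
    · have hr : r < ‖gradient Φ ξ‖ := by simpa using hgrad
      have h2 : 2 ≤ |Real.sqrt lam * ‖gradient Φ ξ‖| := by
        rw [abs_of_nonneg (by positivity)]
        exact (div_le_iff₀' hsqrt).1 hr.le
      rw [hψ0 _ h2, Complex.ofReal_zero, mul_zero, zero_mul]
  have hgrad : Differentiable ℝ (gradient Φ) :=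
    (hΦ.of_le (m := 1 + 1) (WithTop.coe_le_coe.2 le_top)).gradient.differentiable one_ne_zero
  have hvol : volume.real T ≤ r ^ d * c / a₀ := by
    simpa [finrank_euclideanSpace_fin] using measureReal_inter_preimage_closedBall_le volume hgrad
      (isClosed_tsupport b).measurableSet (hinj.mono hsub) ha₀
      (fun ξ hξ => (det_fderiv_gradient_eq_det_hessM Φ ξ).symm ▸ hdet ξ (hsub hξ))
      (by positivity : 0 ≤ r)
  have hM : 0 ≤ sSup ((fun ξ => ‖b ξ‖) '' tsupport b) :=
    (norm_nonneg _).trans (norm_le_sSup_image_norm_tsupport hbB 0)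
  rw [← setIntegral_eq_integral_of_forall_compl_eq_zero hvanish]
  calc _ ≤ sSup ((fun ξ => ‖b ξ‖) '' tsupport b) * volume.real T :=
        norm_setIntegral_le_of_norm_le_const
          (measure_mono Set.inter_subset_left |>.trans_lt hbc.isCompact.measure_lt_top)
          fun ξ _ => (norm_cexp_I_mul_mul_ofReal_mul_le _ _ _ _
            ((abs_of_nonneg (hψ01 _).1).trans_le (hψ01 _).2)).trans
              (norm_le_sSup_image_norm_tsupport hbB ξ)
    _ ≤ sSup ((fun ξ => ‖b ξ‖) '' tsupport b) * (r ^ d * c / a₀) := by gcongr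
    _ = _ := by rw [div_sqrt_pow (by linarith)]; ring
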